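/- Let r > 0 and let g be a function, continuous on B⁺_{4√n r} := {z ∈ (ℂ₊)ⁿ : |z| ≤ 4√n r} and (complex) analytic in its interior, where ℂ₊ = {z ∈ ℂ : Im z ≥ 0}. Then there exists θ ∈ (0,1) such that sup_{B⁺_r} |g| ≤ (sup_{(−2r,2r)ⁿ} |g|)^θ · (sup_{B⁺_{4√n r}} |g|)^{1−θ}, where B⁺_r := {z ∈ (ℂ₊)ⁿ : |z| ≤ r} and (−2r,2r)ⁿ ⊂ ℝⁿ is regarded as a subset of (ℂ₊)ⁿ. -/

import Mathlib

set_option maxHeartbeats 1000000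


open Set

noncomputable section

variable {n : ℕ}

/-- The "upper quadrant" ball `B⁺_r = {z ∈ (ℂ₊)ⁿ : |z| ≤ r}` in `ℂⁿ`. -/
def upperBall (n : ℕ) (r : ℝ) : Set (EuclideanSpace ℂ (Fin n)) :=
  {z | ‖z‖ ≤ r ∧ ∀ i, 0 ≤ (z i).im}

/-- The real cube `(−2r, 2r)ⁿ ⊆ ℝⁿ` regarded as a subset of `(ℂ₊)ⁿ`. -/
def realCube (n : ℕ) (r : ℝ) : Set (EuclideanSpace ℂ (Fin n)) :=
  {z | ∀ i, (z i).im = 0 ∧ (z i).re ∈ Set.Ioo (-(2 * r)) (2 * r)}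

lemma eucl_norm_le_of_coord {n : ℕ} (x y : EuclideanSpace ℂ (Fin n))
    (h : ∀ i, ‖x i‖ ≤ ‖y i‖) : ‖x‖ ≤ ‖y‖ := by
  rw [EuclideanSpace.norm_eq, EuclideanSpace.norm_eq]
  apply Real.sqrt_le_sqrt
  exact Finset.sum_le_sum fun i _ => pow_le_pow_left₀ (norm_nonneg _) (h i) 2

lemma eucl_coord_le_norm {n : ℕ} (z : EuclideanSpace ℂ (Fin n)) (i : Fin n) :
    ‖z i‖ ≤ ‖z‖ := by
  rw [EuclideanSpace.norm_eq]
  have h1 : ‖z i‖ ^ 2 ≤ ∑ j, ‖z j‖ ^ 2 :=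
    Finset.single_le_sum (fun j _ => sq_nonneg ‖z j‖) (Finset.mem_univ i)
  calc ‖z i‖ = Real.sqrt (‖z i‖ ^ 2) := by rw [Real.sqrt_sq (norm_nonneg _)]
    _ ≤ _ := Real.sqrt_le_sqrt h1

lemma upperBall_isCompact {n : ℕ} {R : ℝ} : IsCompact (upperBall n R) := by
  apply Metric.isCompact_of_isClosed_isBounded
  · have : upperBall n R = {z : EuclideanSpace ℂ (Fin n) | ‖z‖ ≤ R} ∩
        ⋂ i, {z : EuclideanSpace ℂ (Fin n) | 0 ≤ (z i).im} := by
      ext z; simp [upperBall, Set.mem_iInter]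
    rw [this]
    exact (isClosed_le continuous_norm continuous_const).inter
      (isClosed_iInter fun i => isClosed_le continuous_const
        (Complex.continuous_im.comp (EuclideanSpace.proj (𝕜 := ℂ) i).continuous))
  · exact (Metric.isBounded_closedBall (x := (0 : EuclideanSpace ℂ (Fin n))) (r := R)).subset
      fun z hz => by simpa [Metric.mem_closedBall] using hz.1


/-- Auxiliary holomorphic weight. -/
def uaux (w : ℂ) : ℂ := (2⁻¹ : ℂ) * (Complex.I / (w + Complex.I * 2⁻¹)) - 5/16

lemma uaux_re (w : ℂ) :
    (uaux w).re = 2⁻¹ * ((w.im + 2⁻¹) / ((w.re)^2 + (w.im + 2⁻¹)^2)) - 5/16 := by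
  simp [uaux, Complex.div_re, Complex.normSq_apply, Complex.add_re, Complex.add_im]
  ring

lemma uaux_denom_pos {w : ℂ} (h : 0 ≤ w.im) : 0 < (w.re)^2 + (w.im + 2⁻¹)^2 := by
  nlinarith [sq_nonneg w.re]

lemma uaux_ne (w : ℂ) (h : 0 ≤ w.im) : w + Complex.I * 2⁻¹ ≠ 0 := by
  intro hw
  have := congrArg Complex.im hw
  simp [Complex.add_im] at this
  linarith

lemma uaux_diff (w : ℂ) (h : 0 ≤ w.im) : DifferentiableAt ℂ uaux w := by
  have h1 : DifferentiableAt ℂ (fun w : ℂ => w + Complex.I * 2⁻¹) w :=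
    differentiableAt_id.add_const _
  have h2 : DifferentiableAt ℂ (fun w : ℂ => Complex.I / (w + Complex.I * 2⁻¹)) w :=
    (differentiableAt_const _).div h1 (uaux_ne w h)
  exact (h2.const_mul _).sub_const _

lemma uaux_re_I : (uaux Complex.I).re = 48⁻¹ := by
  rw [uaux_re]; norm_num

/-- One-variable two-constants theorem on the half-disk of radius 2. -/
lemma halfdisk_two_constants {φ : ℂ → ℂ} {M₀ M : ℝ} (h0 : 0 < M₀) (h01 : M₀ ≤ M)
    (hd : DiffContOnCl ℂ φ {w : ℂ | ‖w‖ < 2 ∧ 0 < w.im})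
    (hM : ∀ w : ℂ, ‖w‖ ≤ 2 → 0 ≤ w.im → ‖φ w‖ ≤ M)
    (hM₀ : ∀ w : ℂ, w.im = 0 → |w.re| ≤ 1 → ‖φ w‖ ≤ M₀) :
    ‖φ Complex.I‖ ≤ M₀ ^ (48⁻¹ : ℝ) * M ^ (1 - 48⁻¹ : ℝ) := by
  have hMpos : 0 < M := lt_of_lt_of_le h0 h01
  set S : Set ℂ := {w : ℂ | ‖w‖ < 2 ∧ 0 < w.im} with hS
  set L : ℝ := Real.log (M / M₀) with hLdef
  have hL : 0 ≤ L := Real.log_nonneg ((one_le_div h0).2 h01)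
  have hSopen : IsOpen S :=
    (isOpen_lt continuous_norm continuous_const).inter
      (isOpen_lt continuous_const Complex.continuous_im)
  have hclos : closure S ⊆ {w : ℂ | ‖w‖ ≤ 2 ∧ 0 ≤ w.im} := by
    apply closure_minimal
    · exact fun w hw => ⟨le_of_lt hw.1, le_of_lt hw.2⟩
    · exact (isClosed_le continuous_norm continuous_const).inter
        (isClosed_le continuous_const Complex.continuous_im)
  set G : ℂ → ℂ := fun w => φ w * (Complex.exp (uaux w * (L : ℂ)) * (M : ℂ)⁻¹) with hG
  have hGnorm : ∀ w : ℂ, ‖G w‖ = ‖φ w‖ * Real.exp ((uaux w).re * L) / M := by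
    intro w
    have h1 : (uaux w * (L : ℂ)).re = (uaux w).re * L := by
      simp [Complex.mul_re]
    rw [hG]
    simp only [norm_mul, Complex.norm_exp, h1, norm_inv,
      Complex.norm_real, Real.norm_eq_abs, abs_of_pos hMpos]
    ring
  have hdE : ∀ w : ℂ, 0 ≤ w.im →
      DifferentiableAt ℂ (fun w => Complex.exp (uaux w * (L : ℂ)) * (M : ℂ)⁻¹) w := by
    intro w h
    exact (((uaux_diff w h).mul_const _).cexp).mul_const _
  have hdG : DiffContOnCl ℂ G S := by
    constructor
    · exact hd.1.mul fun w hw => ((hdE w (le_of_lt hw.2)).differentiableWithinAt)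
    · exact hd.2.mul fun w hw => ((hdE w (hclos hw).2).continuousAt.continuousWithinAt)
  have hbdd : Bornology.IsBounded S := by
    apply (Metric.isBounded_ball (x := (0:ℂ)) (r := 2)).subset
    intro w hw
    simpa [Metric.mem_ball] using hw.1
  have hfront : ∀ w ∈ frontier S, ‖G w‖ ≤ 1 := by
    intro w hwf
    have hwc : w ∈ closure S := frontier_subset_closure hwf
    obtain ⟨hw2, hwim⟩ := hclos hwc
    have hwns : w ∉ S := by
      rw [hSopen.frontier_eq] at hwf; exact hwf.2
    have hq := uaux_denom_pos hwim
    rw [hGnorm, div_le_one hMpos]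
    by_cases hcase : w.im = 0 ∧ |w.re| ≤ 1
    · -- good boundary: Re u ≤ 1
      have hre1 : (uaux w).re ≤ 1 := by
        rw [uaux_re]
        have hdiv : (w.im + 2⁻¹) / (w.re ^ 2 + (w.im + 2⁻¹) ^ 2) ≤ 2 := by
          rw [div_le_iff₀ hq, hcase.1]
          nlinarith [sq_nonneg w.re]
        nlinarith [hdiv]
      calc ‖φ w‖ * Real.exp ((uaux w).re * L)
          ≤ M₀ * Real.exp L := by
            apply mul_le_mul (hM₀ w hcase.1 hcase.2) (Real.exp_le_exp.2 ?_)
              (Real.exp_nonneg _) (le_of_lt h0)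
            nlinarith
        _ = M := by
            rw [hLdef, Real.exp_log (div_pos hMpos h0)]
            field_simp
    · -- bad boundary: Re u ≤ 0
      have hsq : w.re ^ 2 + w.im ^ 2 = ‖w‖ ^ 2 := by
        rw [Complex.sq_norm, Complex.normSq_apply]; ring
      have hre0 : (uaux w).re ≤ 0 := by
        have hdiv : w.im + 2⁻¹ ≤ 5/8 * (w.re ^ 2 + (w.im + 2⁻¹) ^ 2) := by
          rcases eq_or_lt_of_le hwim with him | him
          · -- w.im = 0 and |w.re| > 1
            have h1 : 1 < |w.re| := not_le.1 fun h => hcase ⟨him.symm, h⟩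
            have h2 : 1 ≤ w.re ^ 2 := by nlinarith [sq_abs w.re]
            nlinarith [him.symm]
          · -- ‖w‖ = 2
            have hnw : ‖w‖ = 2 := by
              by_contra hne
              exact hwns ⟨lt_of_le_of_ne hw2 hne, him⟩
            have h4 : w.re ^ 2 + w.im ^ 2 = 4 := by rw [hsq, hnw]; norm_num
            have hy2 : w.im ≤ 2 := by nlinarith [sq_nonneg w.re]
            nlinarith
        have h3 : (w.im + 2⁻¹) / (w.re ^ 2 + (w.im + 2⁻¹) ^ 2) ≤ 5/8 :=
          (div_le_iff₀ hq).2 hdiv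
        rw [uaux_re]
        nlinarith [h3]
      calc ‖φ w‖ * Real.exp ((uaux w).re * L)
          ≤ M * Real.exp 0 := by
            apply mul_le_mul (hM w hw2 hwim) (Real.exp_le_exp.2 (by nlinarith))
              (Real.exp_nonneg _) (le_of_lt hMpos)
        _ = M := by simp
  have hIS : Complex.I ∈ S := by
    refine ⟨?_, by simp⟩
    simp
  have hmain : ‖G Complex.I‖ ≤ 1 :=
    Complex.norm_le_of_forall_mem_frontier_norm_le hbdd hdG hfront (subset_closure hIS)
  rw [hGnorm, uaux_re_I, div_le_one hMpos] at hmain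
  have key : ‖φ Complex.I‖ ≤ M * Real.exp (-(48⁻¹ * L)) := by
    rw [Real.exp_neg]
    have h5 : ‖φ Complex.I‖ = ‖φ Complex.I‖ * Real.exp (48⁻¹ * L) * (Real.exp (48⁻¹ * L))⁻¹ := by
      field_simp
    rw [h5]
    exact mul_le_mul_of_nonneg_right hmain (inv_nonneg.2 (Real.exp_nonneg _))
  have hexp : Real.exp (-(48⁻¹ * L)) = (M₀ / M) ^ (48⁻¹ : ℝ) := by
    rw [Real.rpow_def_of_pos (div_pos h0 hMpos)]
    have hlog : Real.log (M₀ / M) = - Real.log (M / M₀) := by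
      rw [← Real.log_inv, inv_div]
    rw [hlog, hLdef]
    ring_nf
  rw [hexp] at key
  have hfin : M * (M₀ / M) ^ (48⁻¹ : ℝ) = M₀ ^ (48⁻¹ : ℝ) * M ^ (1 - 48⁻¹ : ℝ) := by
    rw [Real.div_rpow (le_of_lt h0) (le_of_lt hMpos), Real.rpow_sub hMpos, Real.rpow_one]
    have hMne : M ^ (48⁻¹ : ℝ) ≠ 0 := ne_of_gt (Real.rpow_pos_of_pos hMpos _)
    field_simp
  rw [← hfin]
  exact key

lemma closure_halfdisk :
    closure {w : ℂ | ‖w‖ < 2 ∧ 0 < w.im} ⊆ {w : ℂ | ‖w‖ ≤ 2 ∧ 0 ≤ w.im} := by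
  apply closure_minimal
  · exact fun w hw => ⟨le_of_lt hw.1, le_of_lt hw.2⟩
  · exact (isClosed_le continuous_norm continuous_const).inter
      (isClosed_le continuous_const Complex.continuous_im)

lemma one_le_sqrt_n {n : ℕ} (hn : 1 ≤ n) : 1 ≤ Real.sqrt n := by
  have h1 : (1:ℝ) ≤ (n:ℝ) := by exact_mod_cast hn
  nlinarith [Real.sq_sqrt (by positivity : (0:ℝ) ≤ (n:ℝ)), Real.sqrt_nonneg (n:ℝ)]

lemma slice_claim {n : ℕ} (hn : 1 ≤ n) {r : ℝ} (hr : 0 < r)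
    {g : EuclideanSpace ℂ (Fin n) → ℂ}
    (hc : ContinuousOn g (upperBall n (4 * Real.sqrt n * r)))
    (ha : AnalyticOnNhd ℂ g
      {z : EuclideanSpace ℂ (Fin n) | ‖z‖ < 4 * Real.sqrt n * r ∧ ∀ i, 0 < (z i).im})
    {A M : ℝ} (hA : 0 < A) (hAM : A ≤ M)
    (hMle : ∀ w ∈ upperBall n (4 * Real.sqrt n * r), ‖g w‖ ≤ M)
    (hAle : ∀ w ∈ realCube n r, ‖g w‖ ≤ A)
    (z : EuclideanSpace ℂ (Fin n)) (hzn : ‖z‖ ≤ r) (hzi : ∀ i, 0 < (z i).im) :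
    ‖g z‖ ≤ A ^ (48⁻¹ : ℝ) * M ^ (1 - 48⁻¹ : ℝ) := by
  have hsn := one_le_sqrt_n hn
  set a : EuclideanSpace ℂ (Fin n) := WithLp.toLp 2 (fun i => ((z i).re : ℂ)) with ha_def
  set b : EuclideanSpace ℂ (Fin n) := WithLp.toLp 2 (fun i => ((z i).im : ℂ)) with hb_def
  set ψ : ℂ → EuclideanSpace ℂ (Fin n) := fun w => a + w • b with hψ_def
  have hψ : ∀ (w : ℂ) (i : Fin n), ψ w i = ((z i).re : ℂ) + w * ((z i).im : ℂ) := by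
    intro w i
    simp [hψ_def, ha_def, hb_def, PiLp.add_apply, PiLp.smul_apply, smul_eq_mul]
  have hψim : ∀ (w : ℂ) (i : Fin n), (ψ w i).im = w.im * (z i).im := by
    intro w i; rw [hψ]; simp
  have hψre : ∀ (w : ℂ) (i : Fin n), (ψ w i).re = (z i).re + w.re * (z i).im := by
    intro w i; rw [hψ]; simp
  have hna : ‖a‖ ≤ r := by
    refine le_trans (eucl_norm_le_of_coord a z fun i => ?_) hzn
    simp only [ha_def, PiLp.toLp_apply, Complex.norm_real, Real.norm_eq_abs]
    exact Complex.abs_re_le_norm _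
  have hnb : ‖b‖ ≤ r := by
    refine le_trans (eucl_norm_le_of_coord b z fun i => ?_) hzn
    simp only [hb_def, PiLp.toLp_apply, Complex.norm_real, Real.norm_eq_abs]
    exact Complex.abs_im_le_norm _
  have hψn : ∀ w : ℂ, ‖w‖ ≤ 2 → ‖ψ w‖ ≤ 3 * r := by
    intro w hw
    calc ‖ψ w‖ ≤ ‖a‖ + ‖w • b‖ := norm_add_le _ _
      _ = ‖a‖ + ‖w‖ * ‖b‖ := by rw [norm_smul]
      _ ≤ r + 2 * r := by
          refine add_le_add hna ?_
          calc ‖w‖ * ‖b‖ ≤ 2 * ‖b‖ := mul_le_mul_of_nonneg_right hw (norm_nonneg _)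
            _ ≤ 2 * r := by linarith
      _ = 3 * r := by ring
  have hmapK : ∀ w : ℂ, ‖w‖ ≤ 2 → 0 ≤ w.im → ψ w ∈ upperBall n (4 * Real.sqrt n * r) := by
    intro w hw1 hw2
    constructor
    · calc ‖ψ w‖ ≤ 3 * r := hψn w hw1
        _ ≤ 4 * Real.sqrt n * r := by nlinarith [hsn, hr]
    · intro i
      rw [hψim]
      exact mul_nonneg hw2 (le_of_lt (hzi i))
  have hmapS : ∀ w : ℂ, ‖w‖ < 2 → 0 < w.im →
      ψ w ∈ {z : EuclideanSpace ℂ (Fin n) | ‖z‖ < 4 * Real.sqrt n * r ∧ ∀ i, 0 < (z i).im} := by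
    intro w hw1 hw2
    constructor
    · calc ‖ψ w‖ ≤ 3 * r := hψn w (le_of_lt hw1)
        _ < 4 * Real.sqrt n * r := by nlinarith [hsn, hr]
    · intro i
      rw [hψim]
      exact mul_pos hw2 (hzi i)
  have hmapCube : ∀ w : ℂ, w.im = 0 → |w.re| ≤ 1 → ψ w ∈ realCube n r := by
    intro w hw1 hw2
    intro i
    have hcoord : (z i).re ^ 2 + (z i).im ^ 2 ≤ r ^ 2 := by
      have h1 : ‖z i‖ ≤ r := le_trans (eucl_coord_le_norm z i) hzn
      have h2 : ‖z i‖ ^ 2 = (z i).re ^ 2 + (z i).im ^ 2 := by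
        rw [Complex.sq_norm, Complex.normSq_apply]; ring
      nlinarith [norm_nonneg (z i)]
    obtain ⟨ht1, ht2⟩ := abs_le.1 hw2
    have hy := (hzi i).le
    refine ⟨by rw [hψim, hw1, zero_mul], ?_, ?_⟩ <;> rw [hψre]
    · nlinarith [le_abs_self (z i).re, neg_abs_le (z i).re, sq_abs (z i).re,
        abs_nonneg (z i).re, sq_nonneg (|(z i).re| - (z i).im),
        mul_nonneg (sub_nonneg.2 ht2) hy, mul_nonneg (by linarith : (0:ℝ) ≤ w.re + 1) hy]
    · nlinarith [le_abs_self (z i).re, neg_abs_le (z i).re, sq_abs (z i).re,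
        abs_nonneg (z i).re, sq_nonneg (|(z i).re| - (z i).im),
        mul_nonneg (sub_nonneg.2 ht2) hy, mul_nonneg (by linarith : (0:ℝ) ≤ w.re + 1) hy]
  have hψdiff : Differentiable ℂ ψ :=
    (differentiable_const a).add (differentiable_id.smul_const b)
  have hd : DiffContOnCl ℂ (fun w => g (ψ w)) {w : ℂ | ‖w‖ < 2 ∧ 0 < w.im} := by
    constructor
    · intro w hw
      exact (((ha (ψ w) (hmapS w hw.1 hw.2)).differentiableAt).comp w
        (hψdiff w)).differentiableWithinAt
    · apply hc.comp hψdiff.continuous.continuousOn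
      intro w hw
      obtain ⟨h1, h2⟩ := closure_halfdisk hw
      exact hmapK w h1 h2
  have := halfdisk_two_constants hA hAM hd
    (fun w hw1 hw2 => hMle _ (hmapK w hw1 hw2))
    (fun w hw1 hw2 => hAle _ (hmapCube w hw1 hw2))
  have hψI : ψ Complex.I = z := by
    ext i
    rw [hψ, mul_comm]
    exact Complex.re_add_im _
  rwa [hψI] at this

/-- **Corollary (two-constants theorem in several complex variables).**
Let `g` be continuous on `B⁺_{4√n r} ⊆ (ℂ₊)ⁿ` and analytic in its interior.  Then there is
`θ ∈ (0,1)` such that `sup_{B⁺_r} |g| ≤ (sup_{(−2r,2r)ⁿ} |g|)^θ (sup_{B⁺_{4√n r}} |g|)^{1−θ}`. -/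
theorem upper_halfspace_two_constants (r : ℝ) (hr : 0 < r)
    (g : EuclideanSpace ℂ (Fin n) → ℂ)
    (hc : ContinuousOn g (upperBall n (4 * Real.sqrt n * r)))
    (ha : AnalyticOnNhd ℂ g
      {z : EuclideanSpace ℂ (Fin n) | ‖z‖ < 4 * Real.sqrt n * r ∧ ∀ i, 0 < (z i).im}) :
    ∃ θ ∈ Set.Ioo (0 : ℝ) 1, ∀ z ∈ upperBall n r,
      ‖g z‖ ≤ (sSup ((fun w => ‖g w‖) '' realCube n r)) ^ θ *
        (sSup ((fun w => ‖g w‖) '' upperBall n (4 * Real.sqrt n * r))) ^ (1 - θ) := by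
  refine ⟨48⁻¹, ⟨by norm_num, by norm_num⟩, ?_⟩
  intro z hz
  set M₀ := sSup ((fun w => ‖g w‖) '' realCube n r) with hM₀def
  set M := sSup ((fun w => ‖g w‖) '' upperBall n (4 * Real.sqrt n * r)) with hMdef
  rcases Nat.eq_zero_or_pos n with hn0 | hn
  · -- the degenerate case n = 0
    subst hn0
    have hz0 : ∀ y : EuclideanSpace ℂ (Fin 0), y = 0 := fun y => Subsingleton.elim y 0
    have hcube : realCube 0 r = {0} := by
      ext y
      constructor
      · intro _; exact hz0 y
      · intro _ i; exact i.elim0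
    have hball : upperBall 0 (4 * Real.sqrt 0 * r) = {0} := by
      ext y
      constructor
      · intro _; exact hz0 y
      · intro _
        refine ⟨?_, fun i => i.elim0⟩
        rw [hz0 y, norm_zero]
        simp
    have hkey : M₀ = ‖g 0‖ ∧ M = ‖g 0‖ := by
      constructor
      · rw [hM₀def, hcube, Set.image_singleton, csSup_singleton]
      · rw [hMdef]
        norm_num at hball ⊢
        rw [hball, Set.image_singleton, csSup_singleton]
    rw [hkey.1, hkey.2, hz0 z]
    have : ‖g 0‖ ^ (48⁻¹ : ℝ) * ‖g 0‖ ^ (1 - 48⁻¹ : ℝ) = ‖g 0‖ := by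
      rw [← Real.rpow_add' (norm_nonneg _) (by norm_num)]
      norm_num
    rw [this]
  · -- the main case n ≥ 1
    have hsn := one_le_sqrt_n hn
    have hrR : r ≤ 4 * Real.sqrt n * r := by nlinarith
    have hK : IsCompact (upperBall n (4 * Real.sqrt n * r)) := upperBall_isCompact
    have hbdd : BddAbove ((fun w => ‖g w‖) '' upperBall n (4 * Real.sqrt n * r)) :=
      (hK.image_of_continuousOn hc.norm).bddAbove
    have hcubesub : realCube n r ⊆ upperBall n (4 * Real.sqrt n * r) := by
      intro y hy
      constructor
      · have hco : ∀ i, ‖y i‖ ^ 2 ≤ (2 * r) ^ 2 := by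
          intro i
          have h2 : ‖y i‖ ^ 2 = (y i).re ^ 2 := by
            rw [Complex.sq_norm, Complex.normSq_apply, (hy i).1]; ring
          rw [h2]
          nlinarith [(hy i).2.1, (hy i).2.2, hr]
        rw [EuclideanSpace.norm_eq]
        calc Real.sqrt (∑ i, ‖y i‖ ^ 2) ≤ Real.sqrt (∑ _i : Fin n, (2*r)^2) := by
              apply Real.sqrt_le_sqrt
              exact Finset.sum_le_sum fun i _ => hco i
          _ = Real.sqrt ((n : ℝ) * (2*r)^2) := by
              rw [Finset.sum_const, Finset.card_univ, Fintype.card_fin, nsmul_eq_mul]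
          _ = Real.sqrt n * (2*r) := by
              rw [Real.sqrt_mul (Nat.cast_nonneg n), Real.sqrt_sq (by linarith)]
          _ ≤ 4 * Real.sqrt n * r := by nlinarith [Real.sqrt_nonneg (n:ℝ)]
      · intro i
        rw [(hy i).1]
    have hbdd0 : BddAbove ((fun w => ‖g w‖) '' realCube n r) :=
      hbdd.mono (Set.image_mono hcubesub)
    have hMle : ∀ w ∈ upperBall n (4 * Real.sqrt n * r), ‖g w‖ ≤ M :=
      fun w hw => le_csSup hbdd ⟨w, hw, rfl⟩
    have hM₀le : ∀ w ∈ realCube n r, ‖g w‖ ≤ M₀ :=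
      fun w hw => le_csSup hbdd0 ⟨w, hw, rfl⟩
    have hcube0 : (0 : EuclideanSpace ℂ (Fin n)) ∈ realCube n r := by
      intro i
      refine ⟨rfl, ?_, ?_⟩ <;> simp <;> linarith
    have hM₀0 : 0 ≤ M₀ := le_trans (norm_nonneg (g 0)) (hM₀le 0 hcube0)
    -- the key claim for points with strictly positive imaginary parts
    have claim : ∀ y : EuclideanSpace ℂ (Fin n), ‖y‖ ≤ r → (∀ i, 0 < (y i).im) →
        ‖g y‖ ≤ M₀ ^ (48⁻¹ : ℝ) * M ^ (1 - 48⁻¹ : ℝ) := by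
      intro y h1 h2
      have hyK : y ∈ upperBall n (4 * Real.sqrt n * r) :=
        ⟨le_trans h1 hrR, fun i => (h2 i).le⟩
      have hM0 : 0 ≤ M := le_trans (norm_nonneg _) (hMle y hyK)
      by_cases hMpos : 0 < M
      · have hev : ∀ ε : ℝ, 0 < ε → ‖g y‖ ≤ (max M₀ ε) ^ (48⁻¹:ℝ) * M ^ (1 - 48⁻¹:ℝ) := by
          intro ε hε
          set A := min (max M₀ ε) M with hAdef
          have hApos : 0 < A := lt_min (lt_of_lt_of_le hε (le_max_right _ _)) hMpos
          have hAM : A ≤ M := min_le_right _ _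
          have hAle : ∀ w ∈ realCube n r, ‖g w‖ ≤ A := fun w hw =>
            le_min (le_trans (hM₀le w hw) (le_max_left _ _)) (hMle w (hcubesub hw))
          refine le_trans (slice_claim hn hr hc ha hApos hAM hMle hAle y h1 h2) ?_
          exact mul_le_mul_of_nonneg_right
            (Real.rpow_le_rpow hApos.le (min_le_left _ _) (by norm_num))
            (Real.rpow_nonneg hM0 _)
        have htend : Filter.Tendsto (fun ε : ℝ => (max M₀ ε) ^ (48⁻¹:ℝ) * M ^ (1 - 48⁻¹:ℝ))
            (nhdsWithin 0 (Set.Ioi 0)) (nhds (M₀ ^ (48⁻¹:ℝ) * M ^ (1 - 48⁻¹:ℝ))) := by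
          have hmax : Filter.Tendsto (fun ε : ℝ => max M₀ ε)
              (nhdsWithin 0 (Set.Ioi 0)) (nhds M₀) := by
            have hcm : Continuous fun ε : ℝ => max M₀ ε := continuous_const.max continuous_id
            have := (hcm.tendsto 0).mono_left (nhdsWithin_le_nhds (s := Set.Ioi (0:ℝ)))
            simpa [max_eq_left hM₀0] using this
          have hrp : ContinuousAt (fun x : ℝ => x ^ (48⁻¹:ℝ)) M₀ :=
            Real.continuousAt_rpow_const _ _ (Or.inr (by norm_num))
          exact (hrp.tendsto.comp hmax).mul_const _
        apply ge_of_tendsto htend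
        filter_upwards [self_mem_nhdsWithin] with ε hε
        exact hev ε hε
      · push_neg at hMpos
        have h4 : ‖g y‖ = 0 := le_antisymm (le_trans (hMle y hyK) hMpos) (norm_nonneg _)
        rw [h4]
        exact mul_nonneg (Real.rpow_nonneg hM₀0 _) (Real.rpow_nonneg hM0 _)
    -- limiting argument for arbitrary z in the closed upper ball
    obtain ⟨hzn, hzim⟩ := hz
    have hrs : 0 < r / Real.sqrt n := div_pos hr (by linarith)
    set cvec : EuclideanSpace ℂ (Fin n) :=
      WithLp.toLp 2 (fun _ => Complex.I * ((r / Real.sqrt n : ℝ) : ℂ)) with hcvec_def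
    have hcim : ∀ i : Fin n, (cvec i).im = r / Real.sqrt n := by
      intro i; simp [hcvec_def]
    have hnc : ‖cvec‖ = r := by
      rw [EuclideanSpace.norm_eq]
      have hci : ∀ i : Fin n, ‖cvec i‖ ^ 2 = (r / Real.sqrt n) ^ 2 := by
        intro i
        simp [hcvec_def, Complex.norm_real,
          abs_of_pos hr, abs_of_nonneg (Real.sqrt_nonneg (n:ℝ))]
      calc Real.sqrt (∑ i, ‖cvec i‖ ^ 2)
          = Real.sqrt (∑ _i : Fin n, (r / Real.sqrt n) ^ 2) := by
            congr 1; exact Finset.sum_congr rfl fun i _ => hci i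
        _ = Real.sqrt ((n : ℝ) * (r / Real.sqrt n) ^ 2) := by
            rw [Finset.sum_const, Finset.card_univ, Fintype.card_fin, nsmul_eq_mul]
        _ = r := by
            rw [div_pow, Real.sq_sqrt (Nat.cast_nonneg n)]
            have hne : (n:ℝ) * (r^2/(n:ℝ)) = r^2 := by
              field_simp
            rw [hne]
            exact Real.sqrt_sq hr.le
    set w : ℝ → EuclideanSpace ℂ (Fin n) := fun δ => (1 - δ) • z + δ • cvec with hw_def
    have hwmem : ∀ δ ∈ Set.Ioo (0:ℝ) 1, ‖w δ‖ ≤ r ∧ ∀ i, 0 < ((w δ) i).im := by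
      intro δ hδ
      constructor
      · calc ‖w δ‖ ≤ ‖(1-δ) • z‖ + ‖δ • cvec‖ := norm_add_le _ _
          _ = |1-δ| * ‖z‖ + |δ| * ‖cvec‖ := by
              rw [norm_smul, norm_smul, Real.norm_eq_abs, Real.norm_eq_abs]
          _ = (1-δ) * ‖z‖ + δ * r := by
              rw [abs_of_pos (by linarith [hδ.2] : (0:ℝ) < 1 - δ), abs_of_pos hδ.1, hnc]
          _ ≤ (1-δ) * r + δ * r := by
              have := hδ.2
              nlinarith [hzn, norm_nonneg z]
          _ = r := by ring
      · intro i
        have happ : (w δ) i = (1-δ) • (z i) + δ • (cvec i) := by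
          simp [hw_def, PiLp.add_apply, PiLp.smul_apply]
        rw [happ]
        simp only [Complex.add_im, Complex.smul_im, hcim i, smul_eq_mul]
        nlinarith [hzim i, hδ.1, hδ.2, hrs]
    have hzK : z ∈ upperBall n (4 * Real.sqrt n * r) := ⟨le_trans hzn hrR, hzim⟩
    have hwcont : Continuous w :=
      ((continuous_const.sub continuous_id).smul continuous_const).add
        (continuous_id.smul continuous_const)
    have hw0 : w 0 = z := by simp [hw_def]
    have htendw : Filter.Tendsto w (nhdsWithin 0 (Set.Ioi 0)) (nhds z) := by
      have := (hwcont.tendsto 0).mono_left (nhdsWithin_le_nhds (s := Set.Ioi (0:ℝ)))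
      rwa [hw0] at this
    have htendg : Filter.Tendsto (fun δ => ‖g (w δ)‖)
        (nhdsWithin 0 (Set.Ioi 0)) (nhds ‖g z‖) := by
      have hmap : Filter.Tendsto w (nhdsWithin 0 (Set.Ioi 0))
          (nhdsWithin z (upperBall n (4 * Real.sqrt n * r))) := by
        apply tendsto_nhdsWithin_of_tendsto_nhds_of_eventually_within _ htendw
        filter_upwards [Ioo_mem_nhdsGT_of_mem ⟨le_refl (0:ℝ), zero_lt_one⟩] with δ hδ
        exact ⟨le_trans (hwmem δ hδ).1 hrR, fun i => ((hwmem δ hδ).2 i).le⟩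
      exact ((hc z hzK).tendsto.comp hmap).norm
    apply le_of_tendsto htendg
    filter_upwards [Ioo_mem_nhdsGT_of_mem ⟨le_refl (0:ℝ), zero_lt_one⟩] with δ hδ
    exact claim (w δ) (hwmem δ hδ).1 (hwmem δ hδ).2

end
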